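/- arXiv:1805.12075 — 6 statements merged into one kernel-verified Lean document; each statement's English description precedes it below -/
import Mathlib

section
/- For all natural numbers k, ℓ, n with ℓ ≤ n, one has the identity of rational numbers ∑_{i=0}^{ℓ} C(ℓ,i) · ((2i+2k)!!/(2k)!!) · ((2n−2i−1)!!/(2n−2ℓ−1)!!) = (2n+2k+1)!!/(2n−2ℓ+2k+1)!!. -/
/-!
Both ratios of double factorials are powers of two times rising factorials
`x^(j) = x (x + 1) ⋯ (x + j - 1)`:
`(2k + 2i)‼ / (2k)‼ = 2^i (k + 1)^(i)` and `(2m + 2j - 1)‼ / (2m - 1)‼ = 2^j (m + 1/2)^(j)`.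
Writing `n = m + ℓ`, the right-hand side is likewise `2^ℓ (k + m + 3/2)^(ℓ)`, so the identity is
the Chu–Vandermonde convolution for rising factorials at `x = k + 1`, `y = m + 1/2`.
-/

open Finset Nat Polynomial

theorem ascPochhammer_eval_add {R : Type*} [CommSemiring R] (x y : R) (n : ℕ) :
    (ascPochhammer R n).eval (x + y) = ∑ ij ∈ antidiagonal n,
      n.choose ij.1 * ((ascPochhammer R ij.1).eval x * (ascPochhammer R ij.2).eval y) := by
  induction n with
  | zero => simp
  | succ n ih =>
    rw [sum_antidiagonal_choose_succ_mul
      (fun i j => (ascPochhammer R i).eval x * (ascPochhammer R j).eval y), ← sum_add_distrib,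
      ascPochhammer_succ_eval, ih, sum_mul]
    refine sum_congr rfl fun ij hij => ?_
    obtain rfl := mem_antidiagonal.1 hij
    rw [Nat.choose_symm_add, ascPochhammer_succ_eval, ascPochhammer_succ_eval]
    push_cast
    ring

/-- Covers both parities of `N`; for `N = 0` the truncated `N - 1 = 0` plays the role of
`(-1)‼ = 1`. -/
theorem doubleFactorial_add_two_mul_sub_one_div {K : Type*} [Field K] [CharZero K] (N j : ℕ) :
    ((N + 2 * j - 1)‼ : K) / (N - 1)‼ = 2 ^ j * (ascPochhammer K j).eval (((N : K) + 1) / 2) := by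
  induction j with
  | zero => simp [(Nat.doubleFactorial_pos _).ne']
  | succ j ih =>
    rw [show N + 2 * (j + 1) - 1 = N + 2 * j + 1 by omega, Nat.doubleFactorial_add_one,
      Nat.cast_mul, mul_div_assoc, ih, ascPochhammer_succ_eval]
    push_cast
    ring

/-- **Bandiera's identity.** For all natural numbers `k, ℓ, n` with `ℓ ≤ n`,
`∑_{i=0}^{ℓ} C(ℓ,i) · ((2i+2k)!!/(2k)!!) · ((2n−2i−1)!!/(2n−2ℓ−1)!!)
  = (2n+2k+1)!!/(2n−2ℓ+2k+1)!!`,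
where `!!` is the double factorial (with `0!! = 1` and `(−1)!! = 1`; note that the natural
subtraction `2n − 2i − 1` equals `0` when `i = n`, matching the convention `(−1)!! = 1`). -/
theorem statement0 (k l n : ℕ) (h : l ≤ n) :
    ∑ i ∈ Finset.range (l + 1),
      (l.choose i : ℚ) *
        ((Nat.doubleFactorial (2 * i + 2 * k) : ℚ) / (Nat.doubleFactorial (2 * k) : ℚ)) *
        ((Nat.doubleFactorial (2 * n - 2 * i - 1) : ℚ) /
          (Nat.doubleFactorial (2 * n - 2 * l - 1) : ℚ)) =
      (Nat.doubleFactorial (2 * n + 2 * k + 1) : ℚ) /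
        (Nat.doubleFactorial (2 * n - 2 * l + 2 * k + 1) : ℚ) := by
  obtain ⟨m, rfl⟩ := Nat.exists_eq_add_of_le' h
  set x : ℚ := ((2 * k + 1 : ℕ) + 1) / 2
  set y : ℚ := ((2 * m : ℕ) + 1) / 2
  have even_ratio (i : ℕ) : ((2 * i + 2 * k)‼ : ℚ) / (2 * k)‼ = 2 ^ i * (ascPochhammer ℚ i).eval x := by
    rw [← doubleFactorial_add_two_mul_sub_one_div, Nat.add_sub_cancel,
      show 2 * k + 1 + 2 * i - 1 = 2 * i + 2 * k by omega]
  have odd_ratio (i : ℕ) (hi : i ≤ l) : ((2 * (m + l) - 2 * i - 1)‼ : ℚ) / (2 * (m + l) - 2 * l - 1)‼ =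
      2 ^ (l - i) * (ascPochhammer ℚ (l - i)).eval y := by
    rw [← doubleFactorial_add_two_mul_sub_one_div,
      show 2 * (m + l) - 2 * i - 1 = 2 * m + 2 * (l - i) - 1 by omega,
      show 2 * (m + l) - 2 * l - 1 = 2 * m - 1 by omega]
  have rhs_ratio : ((2 * (m + l) + 2 * k + 1)‼ : ℚ) / (2 * (m + l) - 2 * l + 2 * k + 1)‼ =
      2 ^ l * (ascPochhammer ℚ l).eval (x + y) := by
    rw [show x + y = ((2 * (m + k + 1) : ℕ) + 1) / 2 by simp only [x, y]; push_cast; ring,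
      ← doubleFactorial_add_two_mul_sub_one_div,
      show 2 * (m + l) + 2 * k + 1 = 2 * (m + k + 1) + 2 * l - 1 by omega,
      show 2 * (m + l) - 2 * l + 2 * k + 1 = 2 * (m + k + 1) - 1 by omega]
  rw [rhs_ratio, ascPochhammer_eval_add, Nat.sum_antidiagonal_eq_sum_range_succ
    (fun i j => (l.choose i : ℚ) * ((ascPochhammer ℚ i).eval x * (ascPochhammer ℚ j).eval y)),
    mul_sum]
  refine sum_congr rfl fun i hi => ?_
  have hi : i ≤ l := Nat.lt_succ_iff.1 (mem_range.1 hi)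
  rw [even_ratio, odd_ratio i hi, ← pow_mul_pow_sub 2 hi]
  ring
end

section
/- Let K be a field and let X = (x_{ij}), Y = (y_{ij}) be 4×4 antisymmetric matrices over K. Then (X·Y)² + (∑_{1≤i<j≤4} x_{ij}·y_{ij})·(X·Y) + Pf(X)·Pf(Y)·I₄ = 0, where I₄ is the 4×4 identity matrix. (Equivalently, in characteristic ≠ 2, (XY)² − (1/2)Tr(XY)·XY + Pf(X)Pf(Y)·I₄ = 0, since (1/2)Tr(XY) = −∑_{i<j} x_{ij}y_{ij}.) -/
/-!
For an alternating `4 × 4` matrix `X` let `X̃` be its dual, obtained by the Hodge star on the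
entries (`x̃₀₁ = -x₂₃`, `x̃₀₂ = x₁₃`, ...). Then `X X̃ = Pf(X) • 1`, and polarising this gives
`X Y + Ỹ X̃ = -⟨X, Y⟩ • 1` with `⟨X, Y⟩ = ∑_{i<j} xᵢⱼ yᵢⱼ`. Hence
`(XY)² = XY (XY + Ỹ X̃) - X (Y Ỹ) X̃ = -⟨X, Y⟩ • XY - Pf(X) Pf(Y) • 1`.
-/

open Matrix

namespace Matrix

variable {R : Type*} [CommRing R]

def skew4 (a b c d e f : R) : Matrix (Fin 4) (Fin 4) R :=
  !![0, a, b, c; -a, 0, d, e; -b, -d, 0, f; -c, -e, -f, 0]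

theorem eq_skew4_of_transpose_eq_neg {X : Matrix (Fin 4) (Fin 4) R} (hX : Xᵀ = -X)
    (hX0 : ∀ i, X i i = 0) : X = skew4 (X 0 1) (X 0 2) (X 0 3) (X 1 2) (X 1 3) (X 2 3) := by
  have hXa : ∀ i j, X j i = -X i j := fun i j => by
    simpa using congrFun (congrFun hX i) j
  ext i j
  fin_cases i <;> fin_cases j <;>
    simp [skew4, hX0, hXa 0 1, hXa 0 2, hXa 0 3, hXa 1 2, hXa 1 3, hXa 2 3]

theorem skew4_mul_skew4_dual (a b c d e f : R) :
    skew4 a b c d e f * skew4 (-f) e (-d) (-c) b (-a) = (a * f - b * e + c * d) • 1 := by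
  ext i j
  fin_cases i <;> fin_cases j <;> simp [skew4, mul_apply, Fin.sum_univ_four] <;> ring

theorem skew4_mul_skew4_add_dual_mul_dual (a b c d e f a' b' c' d' e' f' : R) :
    skew4 a b c d e f * skew4 a' b' c' d' e' f' +
        skew4 (-f') e' (-d') (-c') b' (-a') * skew4 (-f) e (-d) (-c) b (-a) =
      -(a * a' + b * b' + c * c' + d * d' + e * e' + f * f') • 1 := by
  ext i j
  fin_cases i <;> fin_cases j <;> simp [skew4] <;> ring

theorem skew4_mul_skew4_quadratic (a b c d e f a' b' c' d' e' f' : R) :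
    (skew4 a b c d e f * skew4 a' b' c' d' e' f') ^ 2 +
      (a * a' + b * b' + c * c' + d * d' + e * e' + f * f') •
        (skew4 a b c d e f * skew4 a' b' c' d' e' f') +
      ((a * f - b * e + c * d) * (a' * f' - b' * e' + c' * d')) • 1 = 0 := by
  set X := skew4 a b c d e f
  set Y := skew4 a' b' c' d' e' f'
  set X' := skew4 (-f) e (-d) (-c) b (-a)
  set Y' := skew4 (-f') e' (-d') (-c') b' (-a')
  set s := a * a' + b * b' + c * c' + d * d' + e * e' + f * f'
  have hX : X * X' = (a * f - b * e + c * d) • 1 := skew4_mul_skew4_dual a b c d e f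
  have hY : Y * Y' = (a' * f' - b' * e' + c' * d') • 1 := skew4_mul_skew4_dual a' b' c' d' e' f'
  have hXY : X * Y + Y' * X' = -s • 1 :=
    skew4_mul_skew4_add_dual_mul_dual a b c d e f a' b' c' d' e' f'
  have hsq : (X * Y) ^ 2 = X * Y * (X * Y + Y' * X') - X * (Y * Y') * X' := by noncomm_ring
  rw [hsq, hXY, hY]
  simp only [mul_smul_comm, smul_mul_assoc, mul_one, hX, smul_smul]
  module

end Matrix

/-- **Djoković's identity for 4×4 antisymmetric matrices.** If `X, Y` are antisymmetric
`4×4` matrices over a field `K` (i.e. transpose equals negative and diagonal entries vanish),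
then `(XY)² + (∑_{i<j} x_{ij} y_{ij})·(XY) + Pf(X)·Pf(Y)·I₄ = 0`. -/
theorem statement2 {K : Type*} [Field K] (X Y : Matrix (Fin 4) (Fin 4) K)
    (hX : Xᵀ = -X) (hX0 : ∀ i, X i i = 0) (hY : Yᵀ = -Y) (hY0 : ∀ i, Y i i = 0) :
    (X * Y) ^ 2 +
      (X 0 1 * Y 0 1 + X 0 2 * Y 0 2 + X 0 3 * Y 0 3 +
        X 1 2 * Y 1 2 + X 1 3 * Y 1 3 + X 2 3 * Y 2 3) • (X * Y) +
      ((X 0 1 * X 2 3 - X 0 2 * X 1 3 + X 0 3 * X 1 2) *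
        (Y 0 1 * Y 2 3 - Y 0 2 * Y 1 3 + Y 0 3 * Y 1 2)) • (1 : Matrix (Fin 4) (Fin 4) K) = 0 := by
  have h := skew4_mul_skew4_quadratic (X 0 1) (X 0 2) (X 0 3) (X 1 2) (X 1 3) (X 2 3)
    (Y 0 1) (Y 0 2) (Y 0 3) (Y 1 2) (Y 1 3) (Y 2 3)
  rwa [← eq_skew4_of_transpose_eq_neg hX hX0, ← eq_skew4_of_transpose_eq_neg hY hY0] at h
end

section
/- Let α ∈ ℂ, η ∈ ⋀²V_ℂ, β ∈ ⋀⁴V_ℂ satisfy vol(η∧η − 2αβ) = 0 and η∧η ≠ 0. Then Z := {(v,ℓ) ∈ V_ℂ ⊕ V_ℂ^∨ : α·v + ℓ⌟η + η∧v + ℓ⌟β = 0} is the graph of a nondegenerate antisymmetric linear map f : V_ℂ → V_ℂ^∨ satisfying vol(β)·ι(ω_f) = −η. (The defining equation has a component in V_ℂ, namely α·v + ℓ⌟η, and a component in ⋀³V_ℂ, namely η∧v + ℓ⌟β, both required to vanish; ℓ⌟(−) denotes contraction of ℓ ∈ V_ℂ^∨ against exterior powers of V_ℂ.) -/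
/-!
Concrete model of the linear algebra of O'Grady's "Compact tori associated to hyperkähler
manifolds of Kummer type".

`V` is a free ℤ-module of rank 4; we model `V_ℂ = V ⊗ ℂ` as `Fin 4 → ℂ` (standard integral
structure), and its dual `V_ℂ^∨` also as `Fin 4 → ℂ` via the dot-product pairing
`⟨ℓ, v⟩ = ℓ ⬝ᵥ v` (dual basis coordinates).  The volume form `vol : ⋀⁴V → ℤ` is the one
with `vol(e₀∧e₁∧e₂∧e₃) = 1`.  We model `⋀²V_ℂ` (and `⋀²V_ℂ^∨`) as `Fin 6 → ℂ` using the
basis `e₀∧e₁, e₀∧e₂, e₀∧e₃, e₁∧e₂, e₁∧e₃, e₂∧e₃` (resp. the dual one).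
-/

noncomputable section

open Matrix Complex

/-- Model of `V_ℂ` (and of its dual `V_ℂ^∨`). -/
abbrev Vc : Type := Fin 4 → ℂ

/-- Model of `⋀²V_ℂ` (and of `⋀²V_ℂ^∨`), coordinates w.r.t. the basis
`e₀∧e₁, e₀∧e₂, e₀∧e₃, e₁∧e₂, e₁∧e₃, e₂∧e₃`. -/
abbrev W2 : Type := Fin 6 → ℂ

/-- The wedge product `v ∧ w ∈ ⋀²V_ℂ` of two vectors. -/
def w2 (v w : Vc) : W2 :=
  ![v 0 * w 1 - v 1 * w 0, v 0 * w 2 - v 2 * w 0, v 0 * w 3 - v 3 * w 0,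
    v 1 * w 2 - v 2 * w 1, v 1 * w 3 - v 3 * w 1, v 2 * w 3 - v 3 * w 2]

/-- `vol(a ∧ b)` for `a, b ∈ ⋀²V_ℂ`: the nondegenerate symmetric pairing `( , )` on `⋀²V_ℂ`.
(The same formula computes the dual volume form `vol^∨` on `⋀²V_ℂ^∨` in dual coordinates.) -/
def volp (a b : W2) : ℂ :=
  a 0 * b 5 - a 1 * b 4 + a 2 * b 3 + a 3 * b 2 - a 4 * b 1 + a 5 * b 0

/-- The isomorphism `ι : ⋀²(V_ℂ^∨) → ⋀²V_ℂ` defined by the pairing `( , )`: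
it satisfies `vol (ι Ω ∧ v ∧ w) = Ω(v,w)` for all `v, w`. -/
def iotaMap (Ω : W2) : W2 := ![Ω 5, -Ω 4, Ω 3, Ω 2, -Ω 1, Ω 0]

/-- The map `Φ_θ` on decomposable elements: for `x = (v,g)` and `y = (w,h)` in
`V_ℂ ⊕ V_ℂ^∨`, `Φ_θ(x ∧ y) = (θ₁·v∧w + θ₂·ι(g∧h), θ₃·(g(w) − h(v)))`. -/
def Phi (t1 t2 t3 : ℤ) (x y : Vc × Vc) : W2 × ℂ :=
  ((t1 : ℂ) • w2 x.1 y.1 + (t2 : ℂ) • iotaMap (w2 x.2 y.2),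
    (t3 : ℂ) * (x.2 ⬝ᵥ y.1 - y.2 ⬝ᵥ x.1))

/-- A map `f : V_ℂ → V_ℂ^∨` is antisymmetric if `⟨f v, w⟩ = −⟨f w, v⟩` for all `v, w`. -/
def IsAnti (f : Vc → Vc) : Prop := ∀ v w : Vc, f v ⬝ᵥ w = -(f w ⬝ᵥ v)

/-- The `i`-th standard basis vector. -/
def ef (i : Fin 4) : Vc := fun j => if j = i then 1 else 0

/-- `ω_f ∈ ⋀²(V_ℂ^∨)` attached to a map `f : V_ℂ → V_ℂ^∨`:
`ω_f(v,w) = (1/2)(⟨f w, v⟩ − ⟨f v, w⟩)`, written in coordinates `ω_f(eᵢ,eⱼ)`, `i<j`. -/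
def omegaF (f : Vc → Vc) : W2 :=
  ![(f (ef 1) ⬝ᵥ ef 0 - f (ef 0) ⬝ᵥ ef 1) / 2,
    (f (ef 2) ⬝ᵥ ef 0 - f (ef 0) ⬝ᵥ ef 2) / 2,
    (f (ef 3) ⬝ᵥ ef 0 - f (ef 0) ⬝ᵥ ef 3) / 2,
    (f (ef 2) ⬝ᵥ ef 1 - f (ef 1) ⬝ᵥ ef 2) / 2,
    (f (ef 3) ⬝ᵥ ef 1 - f (ef 1) ⬝ᵥ ef 3) / 2,
    (f (ef 3) ⬝ᵥ ef 2 - f (ef 2) ⬝ᵥ ef 3) / 2]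

/-- The Pfaffian of an antisymmetric map `f : V_ℂ → V_ℂ^∨`, defined by
`vol^∨(ω_f ∧ ω_f) = 2·Pf(f)`. -/
def pfaff (f : Vc → Vc) : ℂ := volp (omegaF f) (omegaF f) / 2

/-- Evaluation against a fixed vector, as a linear functional on the dual. -/
def dotL (u : Vc) : Vc →ₗ[ℂ] ℂ where
  toFun ℓ := ℓ ⬝ᵥ u
  map_add' x y := add_dotProduct x y u
  map_smul' c x := by simp

/-- The annihilator `Ann(U) ⊂ V_ℂ^∨` of a subspace `U ⊂ V_ℂ`. -/
def AnnS (U : Submodule ℂ Vc) : Submodule ℂ Vc :=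
  ⨅ u ∈ (U : Set Vc), LinearMap.ker (dotL u)

/-- Complex conjugation on `V_ℂ`, induced by the integral structure. -/
def cV (v : Vc) : Vc := fun i => (starRingEnd ℂ) (v i)

/-- Complex conjugation on `V_ℂ ⊕ V_ℂ^∨`, induced by the integral structure `V ⊕ V^∨`. -/
def cP (x : Vc × Vc) : Vc × Vc := (cV x.1, cV x.2)

/-- Complex conjugation on `⋀²V_ℂ ⊕ ℂ`, induced by the real structure `⋀²V_ℝ ⊕ ℝ`. -/
def cW (x : W2 × ℂ) : W2 × ℂ := (fun k => (starRingEnd ℂ) (x.1 k), (starRingEnd ℂ) x.2)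

/-- The symmetric bilinear form `(α + x·ζ, β + y·ζ) = vol(α∧β) − m·x·y` on `⋀²V_ℂ ⊕ ℂ`. -/
def Bf (m : ℚ) (x y : W2 × ℂ) : ℂ := volp x.1 y.1 - (m : ℂ) * x.2 * y.2

/-- Membership in (the affine cone over) the period domain
`D = {[σ] : (σ,σ) = 0, (σ,σ̄) > 0}`. -/
def memD (m : ℚ) (σ : W2 × ℂ) : Prop :=
  σ ≠ 0 ∧ Bf m σ σ = 0 ∧ (Bf m σ (cW σ)).im = 0 ∧ 0 < (Bf m σ (cW σ)).re

/-- Model of `⋀³V_ℂ`, with basis `e₁∧e₂∧e₃, e₀∧e₂∧e₃, e₀∧e₁∧e₃, e₀∧e₁∧e₂`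
(indexed by the missing index).  `⋀⁴V_ℂ` is modelled as `ℂ` via `vol`. -/
abbrev V3 : Type := Fin 4 → ℂ

/-- Contraction `ℓ ⌟ η ∈ V_ℂ` of `ℓ ∈ V_ℂ^∨` against `η ∈ ⋀²V_ℂ`. -/
def cont2 (l : Vc) (η : W2) : Vc :=
  ![-(l 1 * η 0) - l 2 * η 1 - l 3 * η 2,
    l 0 * η 0 - l 2 * η 3 - l 3 * η 4,
    l 0 * η 1 + l 1 * η 3 - l 3 * η 5,
    l 0 * η 2 + l 1 * η 4 + l 2 * η 5]

/-- The wedge `η ∧ v ∈ ⋀³V_ℂ` of `η ∈ ⋀²V_ℂ` with `v ∈ V_ℂ`. -/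
def wedge21 (η : W2) (v : Vc) : V3 :=
  ![η 3 * v 3 - η 4 * v 2 + η 5 * v 1,
    η 1 * v 3 - η 2 * v 2 + η 5 * v 0,
    η 0 * v 3 - η 2 * v 1 + η 4 * v 0,
    η 0 * v 2 - η 1 * v 1 + η 3 * v 0]

/-- Contraction `ℓ ⌟ β ∈ ⋀³V_ℂ` of `ℓ ∈ V_ℂ^∨` against `β ∈ ⋀⁴V_ℂ ≅ ℂ`. -/
def cont4 (l : Vc) (β : ℂ) : V3 :=
  ![l 0 * β, -(l 1 * β), l 2 * β, -(l 3 * β)]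

/-- The subspace `Z_{[α+η+β]} ⊂ V_ℂ ⊕ V_ℂ^∨` cut out by
`α·v + ℓ⌟η = 0` (component in `V_ℂ`) and `η∧v + ℓ⌟β = 0` (component in `⋀³V_ℂ`). -/
def Zset (α : ℂ) (η : W2) (β : ℂ) : Set (Vc × Vc) :=
  {p | α • p.1 + cont2 p.2 η = 0 ∧ wedge21 η p.1 + cont4 p.2 β = 0}

/-!
Identify `⋀³V_ℂ` with `V_ℂ^∨` through `ℓ ↦ ℓ ⌟ 1`. Then `v ↦ -(η ∧ v)` becomes an antisymmetric
matrix `A_η`, and since `β ≠ 0` (forced by `vol(η∧η) = 2αβ ≠ 0`) the `⋀³V_ℂ`-component of the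
equation says exactly `ℓ = β⁻¹ A_η v`. The `V_ℂ`-component then holds automatically, because
`(A_η v) ⌟ η = -Pf(η) v` with `Pf(η) = vol(η∧η)/2 = αβ`. Nondegeneracy follows from
`det A_η = Pf(η)²`, and reading `ω_f` off the entries of `f = β⁻¹ A_η` gives `ι(ω_f) = -β⁻¹ η`.
-/

def wedgeMatrix (η : W2) : Matrix (Fin 4) (Fin 4) ℂ :=
  !![0, -η 5, η 4, -η 3; η 5, 0, -η 2, η 1; -η 4, η 2, 0, -η 0; η 3, -η 1, η 0, 0]

lemma transpose_smul_wedgeMatrix (c : ℂ) (η : W2) :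
    (c • wedgeMatrix η)ᵀ = -(c • wedgeMatrix η) := by
  ext i j
  fin_cases i <;> fin_cases j <;> simp [wedgeMatrix]

lemma wedgeMatrix_det (η : W2) : (wedgeMatrix η).det = (volp η η / 2) ^ 2 := by
  simp [wedgeMatrix, volp, Matrix.det_succ_row_zero, Fin.sum_univ_succ, Fin.succAbove]
  ring

lemma wedgeMatrix_mulVec (η : W2) (v : Vc) : wedgeMatrix η *ᵥ v =
    ![-(η 5) * v 1 + η 4 * v 2 - η 3 * v 3, η 5 * v 0 - η 2 * v 2 + η 1 * v 3,
      -(η 4) * v 0 + η 2 * v 1 - η 0 * v 3, η 3 * v 0 - η 1 * v 1 + η 0 * v 2] := by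
  ext i
  fin_cases i <;> simp [wedgeMatrix, Matrix.mulVec, dotProduct, Fin.sum_univ_four] <;> ring

lemma wedge21_eq_neg_cont4 (η : W2) (v : Vc) :
    wedge21 η v = -cont4 (wedgeMatrix η *ᵥ v) 1 := by
  ext i
  fin_cases i <;> simp [wedge21, cont4, wedgeMatrix_mulVec] <;> ring

lemma cont2_wedgeMatrix_mulVec (η : W2) (v : Vc) :
    cont2 (wedgeMatrix η *ᵥ v) η = -(volp η η / 2) • v := by
  ext i
  fin_cases i <;> simp [cont2, volp, wedgeMatrix_mulVec] <;> ring

lemma cont2_smul (c : ℂ) (l : Vc) (η : W2) : cont2 (c • l) η = c • cont2 l η := by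
  ext i
  fin_cases i <;> simp [cont2] <;> ring

lemma cont4_eq_smul_cont4_one (l : Vc) (β : ℂ) : cont4 l β = cont4 (β • l) 1 := by
  ext i
  fin_cases i <;> simp [cont4] <;> ring

lemma cont4_one_injective : Function.Injective fun l : Vc => cont4 l 1 := by
  intro l l' h
  ext i
  have hi := congrFun h i
  fin_cases i <;> simpa [cont4] using hi

lemma isAnti_mulVecLin {M : Matrix (Fin 4) (Fin 4) ℂ} (hM : Mᵀ = -M) : IsAnti M.mulVecLin := by
  intro v w
  rw [Matrix.mulVecLin_apply, Matrix.mulVecLin_apply, dotProduct_comm, Matrix.dotProduct_mulVec,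
    ← Matrix.mulVec_transpose, hM, Matrix.neg_mulVec, neg_dotProduct]

lemma omegaF_mulVecLin {M : Matrix (Fin 4) (Fin 4) ℂ} (hM : Mᵀ = -M) :
    omegaF M.mulVecLin = ![M 0 1, M 0 2, M 0 3, M 1 2, M 1 3, M 2 3] := by
  have hanti : ∀ i j, M j i = -M i j := fun i j => by
    simpa using congrFun (congrFun hM i) j
  have hval : ∀ i j, M *ᵥ ef i ⬝ᵥ ef j = M j i := by
    intro i j
    have hef : ∀ k, ef k = Pi.single k (1 : ℂ) := fun k => by
      ext m; simp [ef, Pi.single_apply]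
    simp [hef, Matrix.mulVec_single, dotProduct_single]
  ext k
  fin_cases k <;>
    simp [omegaF, hval, hanti 0 1, hanti 0 2, hanti 0 3, hanti 1 2, hanti 1 3, hanti 2 3]

lemma wedge21_add_cont4_eq_zero_iff (η : W2) (v l : Vc) {β : ℂ} (hβ : β ≠ 0) :
    wedge21 η v + cont4 l β = 0 ↔ l = β⁻¹ • (wedgeMatrix η *ᵥ v) := by
  rw [wedge21_eq_neg_cont4, neg_add_eq_zero, cont4_eq_smul_cont4_one l β,
    cont4_one_injective.eq_iff, eq_inv_smul_iff₀ hβ, eq_comm]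

lemma iotaMap_omegaF_smul_wedgeMatrix (c : ℂ) (η : W2) :
    iotaMap (omegaF (c • wedgeMatrix η).mulVecLin) = -(c • η) := by
  rw [omegaF_mulVecLin (transpose_smul_wedgeMatrix c η)]
  ext k
  fin_cases k <;> simp [iotaMap, wedgeMatrix]

lemma zset_eq_graph {α : ℂ} {η : W2} {β : ℂ} (hβ : β ≠ 0) (hq : volp η η = 2 * α * β) :
    Zset α η β = {p | p.2 = (β⁻¹ • wedgeMatrix η) *ᵥ p.1} := by
  ext ⟨v, l⟩
  simp only [Zset, Set.mem_ofPred_eq, Matrix.smul_mulVec, wedge21_add_cont4_eq_zero_iff η v l hβ]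
  refine ⟨And.right, fun hl => ⟨?_, hl⟩⟩
  rw [hl, cont2_smul, cont2_wedgeMatrix_mulVec, hq, smul_smul]
  field_simp
  module

lemma bijective_mulVecLin_smul_wedgeMatrix {c : ℂ} (hc : c ≠ 0) {η : W2} (hη : volp η η ≠ 0) :
    Function.Bijective (c • wedgeMatrix η).mulVecLin := by
  have hdet : IsUnit (c • wedgeMatrix η).det := by
    rw [Matrix.det_smul, wedgeMatrix_det, isUnit_iff_ne_zero]
    simp [hc, hη]
  rw [← Matrix.isUnit_iff_isUnit_det] at hdet
  exact ⟨Matrix.mulVec_injective_iff_isUnit.2 hdet, Matrix.mulVec_surjective_iff_isUnit.2 hdet⟩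

/-- **Lemma 3.15 (O'Grady).** Let `α + η + β ∈ ℂ ⊕ ⋀²V_ℂ ⊕ ⋀⁴V_ℂ` satisfy
`vol(η∧η − 2αβ) = 0` and `η∧η ≠ 0`.  Then `Z_{[α+η+β]}` is the graph of a nondegenerate
antisymmetric map `f : V_ℂ → V_ℂ^∨` with `vol(β)·ι(ω_f) = −η`. -/
theorem statement8 (α : ℂ) (η : W2) (β : ℂ)
    (hq : volp η η - 2 * α * β = 0) (hne : volp η η ≠ 0) :
    ∃ f : Vc →ₗ[ℂ] Vc, IsAnti ⇑f ∧ Function.Bijective ⇑f ∧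
      Zset α η β = {p : Vc × Vc | p.2 = f p.1} ∧
      β • iotaMap (omegaF ⇑f) = -η := by
  have hq' : volp η η = 2 * α * β := sub_eq_zero.1 hq
  have hβ : β ≠ 0 := by
    rintro rfl
    exact hne (by simpa using hq')
  refine ⟨(β⁻¹ • wedgeMatrix η).mulVecLin, ?_, bijective_mulVecLin_smul_wedgeMatrix
    (inv_ne_zero hβ) hne, zset_eq_graph hβ hq', ?_⟩
  · exact isAnti_mulVecLin (transpose_smul_wedgeMatrix β⁻¹ η)
  · rw [iotaMap_omegaF_smul_wedgeMatrix, smul_neg, smul_inv_smul₀ hβ]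
end
end

section
/- For every positive integer e, taking (c,s) = (1,0) and setting g := gcd(3,e), the alternating form E associated to M(1,e,0) has symplectic elementary divisors (1, g, 3e/g, 3e): there exists a ℤ-basis {u₁,…,u₄,w₁,…,w₄} of ℤ⁴ ⊕ ℤ⁴ with E(uᵢ,uⱼ) = E(wᵢ,wⱼ) = 0 and E(uᵢ,wⱼ) = dᵢ·δᵢⱼ, where (d₁,d₂,d₃,d₄) = (1, g, 3e/g, 3e). -/
open Matrix

/-- The matrix `M(c,e,s)` with rows `(3c,3s,0,0), (3s,ce,0,0), (0,0,c,3s), (0,0,3s,3ce)`. -/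
def Mker (c e s : ℤ) : Matrix (Fin 4) (Fin 4) ℤ :=
  !![3*c, 3*s, 0, 0;
     3*s, c*e, 0, 0;
     0,   0,   c, 3*s;
     0,   0,   3*s, 3*c*e]

/-- The alternating ℤ-bilinear form on `L = ℤ⁴ ⊕ ℤ⁴` with `E(αᵢ,αⱼ) = E(βᵢ,βⱼ) = 0` and
`E(αᵢ,βⱼ) = M i j` on the standard bases of the two summands. -/
def Eform (M : Matrix (Fin 4) (Fin 4) ℤ) (x y : (Fin 4 → ℤ) × (Fin 4 → ℤ)) : ℤ :=
  ∑ i, ∑ j, M i j * (x.1 i * y.2 j - y.1 i * x.2 j)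

/-
`M(1,e,0)` is the diagonal matrix `diag(3, e, 1, 3e)`, and if the columns of unimodular integer
matrices `P` and `Q` are taken as the two halves of a basis, the pairing `E` between them has Gram
matrix `Pᵀ M Q`; so it suffices to bring `diag(3, e, 1, 3e)` to Smith normal form. Writing
`3 = g a`, `e = g b` with `a x + b y = 1`, the block `diag(3, e)` becomes `diag(g, g a b)` under
`P = [[x, -b], [y, a]]`, `Q = [[1, -y b], [1, x a]]`, and the entry `1` is moved to the front.
-/

namespace Matrix

variable {R n : Type*} [CommRing R] [Fintype n] [DecidableEq n]

noncomputable def colBasis (P : Matrix n n R) (hP : IsUnit P.det) : Module.Basis n R (n → R) :=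
  (Pi.basisFun R n).map (P.toLinearEquiv' (P.invertibleOfIsUnitDet hP))

@[simp]
lemma colBasis_apply (P : Matrix n n R) (hP : IsUnit P.det) (j : n) :
    P.colBasis hP j = P.col j := by
  rw [colBasis, Module.Basis.map_apply, Pi.basisFun_apply, ← mulVec_single_one]
  rfl

omit [DecidableEq n] in
lemma col_dotProduct_mulVec_col (P M Q : Matrix n n R) (i j : n) :
    P.col i ⬝ᵥ (M *ᵥ Q.col j) = (Pᵀ * M * Q) i j := by
  simp only [mul_apply, dotProduct, mulVec, col_apply, transpose_apply, Finset.sum_mul,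
    Finset.mul_sum, mul_assoc]
  exact Finset.sum_comm

end Matrix

lemma Eform_inl_inr (M : Matrix (Fin 4) (Fin 4) ℤ) (u w : Fin 4 → ℤ) :
    Eform M (u, 0) (0, w) = u ⬝ᵥ (M *ᵥ w) := by
  simp [Eform, dotProduct, mulVec, Finset.mul_sum, mul_left_comm]

theorem exists_basis_Eform_eq_diagonal {M P Q : Matrix (Fin 4) (Fin 4) ℤ} (hP : IsUnit P.det)
    (hQ : IsUnit Q.det) {d : Fin 4 → ℤ} (h : Pᵀ * M * Q = diagonal d) :
    ∃ B : Module.Basis (Fin 4 ⊕ Fin 4) ℤ ((Fin 4 → ℤ) × (Fin 4 → ℤ)),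
      (∀ i j, Eform M (B (Sum.inl i)) (B (Sum.inl j)) = 0) ∧
      (∀ i j, Eform M (B (Sum.inr i)) (B (Sum.inr j)) = 0) ∧
      (∀ i j, Eform M (B (Sum.inl i)) (B (Sum.inr j)) = if i = j then d i else 0) := by
  refine ⟨(P.colBasis hP).prod (Q.colBasis hQ), fun i j => ?_, fun i j => ?_, fun i j => ?_⟩
  · simp [Eform]
  · simp [Eform]
  · simp [Eform_inl_inr, col_dotProduct_mulVec_col, h, diagonal_apply]

lemma Mker_one_zero (e : ℤ) : Mker 1 e 0 = diagonal ![3, e, 1, 3 * e] := by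
  ext i j
  fin_cases i <;> fin_cases j <;> simp [Mker]

lemma exists_unimodular_mul_diagonal_eq_of_bezout {g a b x y : ℤ} (h : a * x + b * y = 1) :
    ∃ P Q : Matrix (Fin 4) (Fin 4) ℤ, IsUnit P.det ∧ IsUnit Q.det ∧
      Pᵀ * diagonal ![g * a, g * b, 1, g * a * (g * b)] * Q =
        diagonal ![1, g, g * a * b, g * a * (g * b)] := by
  refine ⟨!![0, x, -b, 0; 0, y, a, 0; 1, 0, 0, 0; 0, 0, 0, 1],
    !![0, 1, -(y * b), 0; 0, 1, x * a, 0; 1, 0, 0, 0; 0, 0, 0, 1], ?_, ?_, ?_⟩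
  · rw [Int.isUnit_iff]
    left
    simp [det_succ_row_zero, Fin.sum_univ_succ, Fin.succAbove]
    linear_combination h
  · rw [Int.isUnit_iff]
    left
    simp [det_succ_row_zero, Fin.sum_univ_succ, Fin.succAbove]
    linear_combination h
  · ext i j
    fin_cases i <;> fin_cases j <;> simp [mul_apply, Fin.sum_univ_four] <;> grind

lemma exists_unimodular_mul_diagonal_eq_gcd {a b : ℤ} (ha : a ≠ 0) :
    ∃ P Q : Matrix (Fin 4) (Fin 4) ℤ, IsUnit P.det ∧ IsUnit Q.det ∧
      Pᵀ * diagonal ![a, b, 1, a * b] * Q =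
        diagonal ![1, (Int.gcd a b : ℤ), a * b / (Int.gcd a b : ℤ), a * b] := by
  have hg : (Int.gcd a b : ℤ) ≠ 0 := Int.natCast_ne_zero.mpr (Int.gcd_pos_of_ne_zero_left b ha).ne'
  obtain ⟨a', ha'⟩ := Int.gcd_dvd_left a b
  obtain ⟨b', hb'⟩ := Int.gcd_dvd_right a b
  have hbezout : a' * Int.gcdA a b + b' * Int.gcdB a b = 1 := mul_left_cancel₀ hg <| by
    linear_combination -Int.gcdA a b * ha' - Int.gcdB a b * hb' - Int.gcd_eq_gcd_ab a b
  generalize (Int.gcd a b : ℤ) = g at hg ha' hb' ⊢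
  have hlcm : a * b / g = g * a' * b' := Int.ediv_eq_of_eq_mul_right hg (by rw [ha', hb']; ring)
  rw [hlcm, ha', hb']
  exact exists_unimodular_mul_diagonal_eq_of_bezout hbezout

theorem statement11_general (e : ℤ) :
    ∃ B : Module.Basis (Fin 4 ⊕ Fin 4) ℤ ((Fin 4 → ℤ) × (Fin 4 → ℤ)),
      (∀ i j, Eform (Mker 1 e 0) (B (Sum.inl i)) (B (Sum.inl j)) = 0) ∧
      (∀ i j, Eform (Mker 1 e 0) (B (Sum.inr i)) (B (Sum.inr j)) = 0) ∧
      (∀ i j, Eform (Mker 1 e 0) (B (Sum.inl i)) (B (Sum.inr j)) =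
        if i = j then ![1, (Int.gcd 3 e : ℤ), 3*e / (Int.gcd 3 e : ℤ), 3*e] i else 0) := by
  obtain ⟨P, Q, hP, hQ, hPQ⟩ := exists_unimodular_mul_diagonal_eq_gcd (b := e) three_ne_zero
  rw [Mker_one_zero]
  exact exists_basis_Eform_eq_diagonal hP hQ hPQ

/-- Elementary divisors (1, g, 3e/g, 3e), g = gcd(3,e), for the polarization with (c,s) = (1,0) (divisibility 1). -/
theorem statement11 (e : ℤ) (he : 0 < e) :
    ∃ B : Module.Basis (Fin 4 ⊕ Fin 4) ℤ ((Fin 4 → ℤ) × (Fin 4 → ℤ)),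
      (∀ i j, Eform (Mker 1 e 0) (B (Sum.inl i)) (B (Sum.inl j)) = 0) ∧
      (∀ i j, Eform (Mker 1 e 0) (B (Sum.inr i)) (B (Sum.inr j)) = 0) ∧
      (∀ i j, Eform (Mker 1 e 0) (B (Sum.inl i)) (B (Sum.inr j)) =
        if i = j then ![1, (Int.gcd 3 e : ℤ), 3*e / (Int.gcd 3 e : ℤ), 3*e] i else 0) :=
  statement11_general e
end

section
/- For every positive integer e, taking (c,s) = (6,1), the alternating form E associated to M(6,e,1) has symplectic elementary divisors (3, 3, 3(12e−1), 3(12e−1)): there exists a ℤ-basis {u₁,…,u₄,w₁,…,w₄} of ℤ⁴ ⊕ ℤ⁴ with E(uᵢ,uⱼ) = E(wᵢ,wⱼ) = 0 and E(uᵢ,wⱼ) = dᵢ·δᵢⱼ, where (d₁,d₂,d₃,d₄) = (3, 3, 3(12e−1), 3(12e−1)). -/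
open Matrix

/-! The form `E` pairs the two Lagrangian summands through `M`, so replacing the standard bases
of the summands by the rows of a unimodular `P` and the columns of a unimodular `Q` replaces `M`
by `P * M * Q`. It therefore suffices to bring `M(3k,e,1)` to Smith normal form: both of its
`2 × 2` blocks have content `3` and determinant `9(3k²e − 1)`. -/

lemma Eform_eq_dotProduct (M : Matrix (Fin 4) (Fin 4) ℤ) (x y : (Fin 4 → ℤ) × (Fin 4 → ℤ)) :
    Eform M x y = x.1 ⬝ᵥ M *ᵥ y.2 - y.1 ⬝ᵥ M *ᵥ x.2 := by
  simp only [Eform, dotProduct, mulVec, Finset.mul_sum, ← Finset.sum_sub_distrib]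
  exact Finset.sum_congr rfl fun i _ => Finset.sum_congr rfl fun j _ => by ring

lemma exists_basis_Eform_eq_of_mul_eq {M P Q D : Matrix (Fin 4) (Fin 4) ℤ}
    (hP : IsUnit P) (hQ : IsUnit Q) (h : P * M * Q = D) :
    ∃ B : Module.Basis (Fin 4 ⊕ Fin 4) ℤ ((Fin 4 → ℤ) × (Fin 4 → ℤ)),
      (∀ i j, Eform M (B (Sum.inl i)) (B (Sum.inl j)) = 0) ∧
      (∀ i j, Eform M (B (Sum.inr i)) (B (Sum.inr j)) = 0) ∧
      (∀ i j, Eform M (B (Sum.inl i)) (B (Sum.inr j)) = D i j) := by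
  have := ((isUnit_transpose P).2 hP).invertible
  have := hQ.invertible
  let B := ((Pi.basisFun ℤ (Fin 4)).map (Pᵀ.toLinearEquiv' ‹_›)).prod
    ((Pi.basisFun ℤ (Fin 4)).map (Q.toLinearEquiv' ‹_›))
  have hl (i) : B (Sum.inl i) = (P i, 0) := by
    simp only [B, Module.Basis.prod_apply, Sum.elim_inl, Function.comp_apply,
      Module.Basis.map_apply, Pi.basisFun_apply, LinearMap.inl_apply]
    exact congrArg (·, 0) (mulVec_single_one Pᵀ i)
  have hr (j) : B (Sum.inr j) = (0, Q.col j) := by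
    simp only [B, Module.Basis.prod_apply, Sum.elim_inr, Function.comp_apply,
      Module.Basis.map_apply, Pi.basisFun_apply, LinearMap.inr_apply]
    exact congrArg (0, ·) (mulVec_single_one Q j)
  refine ⟨B, fun i j => ?_, fun i j => ?_, fun i j => ?_⟩
  · simp [hl, Eform_eq_dotProduct]
  · simp [hr, Eform_eq_dotProduct]
  · rw [hl, hr, Eform_eq_dotProduct, ← h, Matrix.mul_assoc]
    simp [mul_apply, dotProduct, mulVec]

/-- Rows `1, 2` of `smithLeft k` take the rows `2, 4` of `M(3k,e,1)`, which start with the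
content `3` of their blocks, and rows `3, 4` clear the leading entries of rows `1, 3`;
`smithRight k e` then clears the rest of rows `2, 4`. -/
def smithLeft (k : ℤ) : Matrix (Fin 4) (Fin 4) ℤ :=
  !![ 0, 1,   0, 0;
      0, 0,   0, 1;
     -1, 3*k, 0, 0;
      0, 0,  -1, k]

def smithRight (k e : ℤ) : Matrix (Fin 4) (Fin 4) ℤ :=
  !![1, 0, -k*e, 0;
     0, 0, 1,    0;
     0, 1, 0,    -3*k*e;
     0, 0, 0,    1]

lemma isUnit_smithLeft (k : ℤ) : IsUnit (smithLeft k) := by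
  rw [isUnit_iff_isUnit_det]
  simp [smithLeft, det_succ_row_zero, Fin.sum_univ_succ, Fin.succAbove]

lemma isUnit_smithRight (k e : ℤ) : IsUnit (smithRight k e) := by
  rw [isUnit_iff_isUnit_det]
  simp [smithRight, det_succ_row_zero, Fin.sum_univ_succ]

lemma smithLeft_mul_Mker_mul_smithRight (k e : ℤ) :
    smithLeft k * Mker (3 * k) e 1 * smithRight k e =
      diagonal ![3, 3, 3 * (3 * k ^ 2 * e - 1), 3 * (3 * k ^ 2 * e - 1)] := by
  ext i j
  fin_cases i <;> fin_cases j <;>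
    simp [smithLeft, smithRight, Mker, mul_apply, Fin.sum_univ_four] <;> ring

theorem statement14_general (e : ℤ) :
    ∃ B : Module.Basis (Fin 4 ⊕ Fin 4) ℤ ((Fin 4 → ℤ) × (Fin 4 → ℤ)),
      (∀ i j, Eform (Mker 6 e 1) (B (Sum.inl i)) (B (Sum.inl j)) = 0) ∧
      (∀ i j, Eform (Mker 6 e 1) (B (Sum.inr i)) (B (Sum.inr j)) = 0) ∧
      (∀ i j, Eform (Mker 6 e 1) (B (Sum.inl i)) (B (Sum.inr j)) =
        if i = j then ![3, 3, 3*(12*e-1), 3*(12*e-1)] i else 0) := by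
  have h := smithLeft_mul_Mker_mul_smithRight 2 e
  rw [show (3 : ℤ) * 2 = 6 by norm_num,
    show 3 * (3 * 2 ^ 2 * e - 1) = 3 * (12 * e - 1) by ring] at h
  simpa only [diagonal_apply] using
    exists_basis_Eform_eq_of_mul_eq (isUnit_smithLeft 2) (isUnit_smithRight 2 e) h

/-- Elementary divisors (3, 3, 3(12e−1), 3(12e−1)) for the polarization with (c,s) = (6,1) (divisibility 6). -/
theorem statement14 (e : ℤ) (he : 0 < e) :
    ∃ B : Module.Basis (Fin 4 ⊕ Fin 4) ℤ ((Fin 4 → ℤ) × (Fin 4 → ℤ)),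
      (∀ i j, Eform (Mker 6 e 1) (B (Sum.inl i)) (B (Sum.inl j)) = 0) ∧
      (∀ i j, Eform (Mker 6 e 1) (B (Sum.inr i)) (B (Sum.inr j)) = 0) ∧
      (∀ i j, Eform (Mker 6 e 1) (B (Sum.inl i)) (B (Sum.inr j)) =
        if i = j then ![3, 3, 3*(12*e-1), 3*(12*e-1)] i else 0) :=
  statement14_general e
end

section
/- Assume θ₁, θ₂, θ₃ are all nonzero, m ∈ ℚ is positive, θ₁·θ₂ = 2m·θ₃², and the setup of the context. Then: (i) Ψ maps the rational subspace V_ℚ ⊕ V_ℚ^∨ onto itself; (ii) Ψ∘Ψ = −(N − b²)·Id, where N − b² = (θ₃²/(c⁴e²θ₂²))·(2m·c²e − s²) = (θ₃²/(c⁴e²θ₂²))·m·(h,h)^∨ > 0; (iii) for every [σ] ∈ D_h one has Ψ(H^{1,0}_{[σ]}(θ)) ⊆ H^{1,0}_{[σ]}(θ), and the restriction of Ψ to H^{1,0}_{[σ]}(θ) has the two eigenvalues ±i·√(N − b²), each with a 2-dimensional eigenspace. -/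
/-!
Concrete model of the linear algebra of O'Grady's "Compact tori associated to hyperkähler
manifolds of Kummer type".

`V` is a free ℤ-module of rank 4; we model `V_ℂ = V ⊗ ℂ` as `Fin 4 → ℂ` (standard integral
structure), and its dual `V_ℂ^∨` also as `Fin 4 → ℂ` via the dot-product pairing
`⟨ℓ, v⟩ = ℓ ⬝ᵥ v` (dual basis coordinates).  The volume form `vol : ⋀⁴V → ℤ` is the one
with `vol(e₀∧e₁∧e₂∧e₃) = 1`.  We model `⋀²V_ℂ` (and `⋀²V_ℂ^∨`) as `Fin 6 → ℂ` using the
basis `e₀∧e₁, e₀∧e₂, e₀∧e₃, e₁∧e₂, e₁∧e₃, e₂∧e₃` (resp. the dual one).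
-/

noncomputable section

open Matrix Complex

/-- The subspace `H^{1,0}_{[σ]}(θ) ⊂ V_ℂ ⊕ V_ℂ^∨` attached to `[σ] ∈ D`:
if the `ζ`-component of `σ` is nonzero, it is the graph of the (unique) nondegenerate
antisymmetric `f : V_ℂ → V_ℂ^∨` with `ι(ω_f) = α`, where `σ` is rescaled so that
`σ = θ₂·α − 2θ₃·ζ`; if `σ ∈ ⋀²V_ℂ` (then `σ` is decomposable), it is `U ⊕ Ann(U)` for
the unique 2-dimensional `U ⊂ V_ℂ` with `⋀²U = ℂσ`. -/
def IsH10 (t1 t2 t3 : ℤ) (σ : W2 × ℂ) (H : Submodule ℂ (Vc × Vc)) : Prop :=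
  (σ.2 ≠ 0 ∧ ∃ f : Vc →ₗ[ℂ] Vc, IsAnti ⇑f ∧ Function.Bijective ⇑f ∧
      iotaMap (omegaF ⇑f) = ((-2 * (t3 : ℂ)) / ((t2 : ℂ) * σ.2)) • σ.1 ∧
      H = LinearMap.graph f) ∨
  (σ.2 = 0 ∧ ∃ U : Submodule ℂ Vc, Module.finrank ℂ U = 2 ∧
      (∃ v w : Vc, U = Submodule.span ℂ {v, w} ∧ ∃ t : ℂ, t ≠ 0 ∧ w2 v w = t • σ.1) ∧
      H = U.prod (AnnS U))

/-- Evaluation of a class `h ∈ (⋀²V ⊕ ℤ)^∨` (given by its integral coordinates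
`hW : Fin 6 → ℤ` in the dual basis, and `hz ∈ ℤ` dual to `ζ`) on `⋀²V_ℂ ⊕ ℂ`. -/
def hpC (hW : Fin 6 → ℤ) (hz : ℤ) (x : W2 × ℂ) : ℂ :=
  (∑ k, (hW k : ℂ) * x.1 k) + (hz : ℂ) * x.2

/-- The value `(h,h)^∨` of the dual of the form `( , )` on `h` (a rational number). -/
def dualSq (m : ℚ) (hW : Fin 6 → ℤ) (hz : ℤ) : ℚ :=
  ((hW 0 * hW 5 - hW 1 * hW 4 + hW 2 * hW 3 +
    hW 3 * hW 2 - hW 4 * hW 1 + hW 5 * hW 0 : ℤ) : ℚ) - (hz : ℚ) ^ 2 / m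

/-- The class `h₀ = c(e·v₁^∨∧v₂^∨ + v₃^∨∧v₄^∨) ∈ ⋀²V^∨`, in dual coordinates. -/
def h0v (c e : ℤ) : W2 := ![(c : ℂ) * (e : ℂ), 0, 0, 0, 0, (c : ℂ)]

/-- Evaluation of `h = h₀ + s·ζ^∨ ∈ (⋀²V ⊕ ℤ)^∨` on `⋀²V_ℂ ⊕ ℂ`. -/
def hev (c e s : ℤ) (x : W2 × ℂ) : ℂ :=
  (c : ℂ) * (e : ℂ) * x.1 0 + (c : ℂ) * x.1 5 + (s : ℂ) * x.2

/-- `N = θ₁/(c²·e·θ₂)`. -/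
def Nq (t1 t2 c e : ℤ) : ℚ := (t1 : ℚ) / ((c : ℚ) ^ 2 * (e : ℚ) * (t2 : ℚ))

/-- `b = s·θ₃/(c²·e·θ₂)`. -/
def bq (t2 t3 c e s : ℤ) : ℚ := (s : ℚ) * (t3 : ℚ) / ((c : ℚ) ^ 2 * (e : ℚ) * (t2 : ℚ))

/-- The endomorphism `Ψ(v,ℓ) = (g⁻¹(ℓ) − b·v, b·ℓ − N·g(v))` of `V_ℂ ⊕ V_ℂ^∨`. -/
def PsiL (g : Vc ≃ₗ[ℂ] Vc) (N b : ℚ) : (Vc × Vc) →ₗ[ℂ] Vc × Vc :=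
  LinearMap.prod
    (g.symm.toLinearMap ∘ₗ LinearMap.snd ℂ Vc Vc - (b : ℂ) • LinearMap.fst ℂ Vc Vc)
    ((b : ℂ) • LinearMap.snd ℂ Vc Vc - (N : ℂ) • (g.toLinearMap ∘ₗ LinearMap.fst ℂ Vc Vc))

/-- The rational subspace `V_ℚ ⊕ V_ℚ^∨ ⊂ V_ℂ ⊕ V_ℂ^∨`. -/
def ratSet : Set (Vc × Vc) :=
  {p | (∀ i, ∃ q : ℚ, p.1 i = (q : ℂ)) ∧ (∀ i, ∃ q : ℚ, p.2 i = (q : ℂ))}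

/-- The complex number `i·√(N − b²)`. -/
def sqNb (N b : ℚ) : ℂ := Complex.I * ((Real.sqrt ((N - b ^ 2 : ℚ) : ℝ) : ℝ) : ℂ)

/-- The alternating form `⟨x,y⟩_{θ,h} = ⟨h, Φ_θ(x∧y)⟩` on `V_ℂ ⊕ V_ℂ^∨`. -/
def Eth (t1 t2 t3 c e s : ℤ) (x y : Vc × Vc) : ℂ := hev c e s (Phi t1 t2 t3 x y)

/-!
Everything reduces to identities between antisymmetric `4 × 4` matrices. For antisymmetric
`f, g : V_ℂ → V_ℂ^∨`, reading `ι(ω_g)` as a map `V_ℂ^∨ → V_ℂ`, one has `g ∘ ι(ω_g) = −Pf(g)` and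
`f ∘ ι(ω_g) ∘ f = Pf(f)·g − (ω_f, ω_g)·f`, so `Pf(g)·f g⁻¹ f = (ω_f, ω_g)·f − Pf(f)·g`. The conditions
`σ ∈ D_h` with `ι(ω_f) ∝ σ` say exactly that `(ω_f, ω_g) = 2b·Pf(g)` and `Pf(f) = N·Pf(g)`, i.e.
`f g⁻¹ f = 2b·f − N·g`; this makes the graph of `f` invariant under `Ψ`.

The eigenspace of `Ψ` for `τ − b`, with `τ² − 2bτ + N = 0`, is the graph of `τ·g`, so it meets
the graph of `f` in (the graph over) `ker(f − τ g)`. For the two roots `τ, τ'` the relation above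
gives `(f − τ g) g⁻¹ (f − τ' g) = 0`; since a nonzero antisymmetric map has rank at least `2`,
both kernels are `2`-dimensional. When `σ ∈ ⋀²V_ℂ`, `⟨h, σ⟩ = 0` says that `U` is isotropic for
`g`, so `g(U) = Ann(U)` and each eigenspace meets `U ⊕ Ann(U)` in the graph of `τ·g` over `U`.
Rationality holds because `g` has an integral matrix and `Ψ² = −(N − b²)`.
-/

namespace LinearMap

variable {K M M' : Type*} [Field K] [AddCommGroup M] [Module K M] [AddCommGroup M'] [Module K M']

lemma injective_id_prod (φ : M →ₗ[K] M') : Function.Injective (LinearMap.id.prod φ) :=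
  fun _ _ h => congrArg Prod.fst h

theorem finrank_graph_inf_graph (φ ψ : M →ₗ[K] M') :
    Module.finrank K ↥(graph φ ⊓ graph ψ) = Module.finrank K ↥(ker (φ - ψ)) := by
  have h : graph φ ⊓ graph ψ = (ker (φ - ψ)).map (LinearMap.id.prod φ) := by
    ext ⟨x, y⟩
    simp only [Submodule.mem_inf, mem_graph_iff, Submodule.mem_map, mem_ker, sub_apply,
      sub_eq_zero]
    constructor
    · rintro ⟨rfl, h⟩; exact ⟨x, h, rfl⟩
    · rintro ⟨z, hz, h⟩
      obtain ⟨rfl, rfl⟩ := Prod.mk.inj h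
      exact ⟨rfl, hz⟩
  rw [h, (Submodule.equivMapOfInjective _ (injective_id_prod φ) _).finrank_eq]

theorem finrank_graph_inf_prod {φ : M →ₗ[K] M'} {U : Submodule K M} {W : Submodule K M'}
    (hU : ∀ x ∈ U, φ x ∈ W) :
    Module.finrank K ↥(graph φ ⊓ U.prod W) = Module.finrank K U := by
  have h : graph φ ⊓ U.prod W = U.map (LinearMap.id.prod φ) := by
    ext ⟨x, y⟩
    simp only [Submodule.mem_inf, mem_graph_iff, Submodule.mem_prod, Submodule.mem_map]
    constructor
    · rintro ⟨rfl, hx, -⟩; exact ⟨x, hx, rfl⟩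
    · rintro ⟨z, hz, h⟩
      obtain ⟨rfl, rfl⟩ := Prod.mk.inj h
      exact ⟨rfl, hz, hU z hz⟩
  rw [h, (Submodule.equivMapOfInjective _ (injective_id_prod φ) _).finrank_eq]

end LinearMap

def skewMatrix (ω : W2) : Matrix (Fin 4) (Fin 4) ℂ :=
  !![0, ω 0, ω 1, ω 2; -ω 0, 0, ω 3, ω 4; -ω 1, -ω 3, 0, ω 5; -ω 2, -ω 4, -ω 5, 0]

lemma skewMatrix_mul_skewMatrix_iotaMap (ω : W2) :
    skewMatrix ω * skewMatrix (iotaMap ω) = -(volp ω ω / 2) • (1 : Matrix (Fin 4) (Fin 4) ℂ) := by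
  ext i j
  fin_cases i <;> fin_cases j <;>
    simp [skewMatrix, iotaMap, volp, Matrix.mul_apply, Fin.sum_univ_four] <;> ring

lemma skewMatrix_mul_skewMatrix_iotaMap_mul (α β : W2) :
    skewMatrix α * skewMatrix (iotaMap β) * skewMatrix α =
      (volp α α / 2) • skewMatrix β - volp α β • skewMatrix α := by
  ext i j
  fin_cases i <;> fin_cases j <;>
    simp [skewMatrix, iotaMap, volp, Matrix.mul_apply, Fin.sum_univ_four] <;> ring

lemma iotaMap_iotaMap (ω : W2) : iotaMap (iotaMap ω) = ω := by
  ext k; fin_cases k <;> simp [iotaMap]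

lemma iotaMap_smul (μ : ℂ) (ω : W2) : iotaMap (μ • ω) = μ • iotaMap ω := by
  ext k; fin_cases k <;> simp [iotaMap]

lemma dotProduct_ef (ℓ : Vc) (j : Fin 4) : ℓ ⬝ᵥ ef j = ℓ j := by
  simp [ef, dotProduct]

lemma ef_eq_single (i : Fin 4) : ef i = Pi.single i 1 := by
  ext j; simp [ef, Pi.single_apply]

lemma omegaF_smul (τ : ℂ) (φ : Vc → Vc) : omegaF (τ • φ) = τ • omegaF φ := by
  ext k; fin_cases k <;> simp [omegaF, smul_dotProduct] <;> ring

namespace IsAnti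

variable {f f' : Vc →ₗ[ℂ] Vc}

lemma apply_ef_apply (hf : IsAnti ⇑f) (i j : Fin 4) : f (ef i) j = -f (ef j) i := by
  simpa only [dotProduct_ef] using hf (ef i) (ef j)

lemma apply_ef_self (hf : IsAnti ⇑f) (i : Fin 4) : f (ef i) i = 0 := by
  linear_combination hf.apply_ef_apply i i / 2

lemma smul_sub (hf : IsAnti ⇑f) (hf' : IsAnti ⇑f') (τ : ℂ) : IsAnti ⇑(τ • f' - f) := by
  intro v w
  simp only [LinearMap.sub_apply, LinearMap.smul_apply, sub_dotProduct, smul_dotProduct, hf v w,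
    hf' v w, smul_eq_mul]
  ring

theorem toMatrix'_eq (hf : IsAnti ⇑f) : LinearMap.toMatrix' f = skewMatrix (omegaF ⇑f) := by
  ext i j
  have hij : LinearMap.toMatrix' f i j = (f (ef j) i - f (ef i) j) / 2 := by
    rw [LinearMap.toMatrix'_apply, ← ef_eq_single, hf.apply_ef_apply j i]; ring
  rw [hij]
  fin_cases i <;> fin_cases j <;> simp [skewMatrix, omegaF, dotProduct_ef] <;> ring

theorem apply_eq_mulVec (hf : IsAnti ⇑f) (x : Vc) : f x = skewMatrix (omegaF ⇑f) *ᵥ x := by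
  rw [← hf.toMatrix'_eq, LinearMap.toMatrix'_mulVec]

theorem dotProduct_apply (hf : IsAnti ⇑f) (v w : Vc) : f v ⬝ᵥ w = -(omegaF ⇑f ⬝ᵥ w2 v w) := by
  rw [hf.apply_eq_mulVec]
  simp only [dotProduct, mulVec, skewMatrix, Fin.isValue, of_apply, cons_val', cons_val_fin_one,
    Fin.sum_univ_four, cons_val_zero, cons_val_one, cons_val, zero_mul, zero_add, neg_mul, add_zero,
    w2, Fin.sum_univ_six, neg_add_rev]
  ring

theorem toMatrix'_symm {g : Vc ≃ₗ[ℂ] Vc} (hg : IsAnti ⇑g) (hpf : pfaff ⇑g ≠ 0) :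
    LinearMap.toMatrix' (g.symm : Vc →ₗ[ℂ] Vc) =
      -(pfaff ⇑g)⁻¹ • skewMatrix (iotaMap (omegaF ⇑g)) := by
  have hG : LinearMap.toMatrix' (g : Vc →ₗ[ℂ] Vc) = skewMatrix (omegaF ⇑g) :=
    toMatrix'_eq (f := (g : Vc →ₗ[ℂ] Vc)) hg
  have hS : LinearMap.toMatrix' (g : Vc →ₗ[ℂ] Vc) *
      LinearMap.toMatrix' (g.symm : Vc →ₗ[ℂ] Vc) = 1 := by
    rw [← LinearMap.toMatrix'_comp, LinearEquiv.comp_coe, LinearEquiv.symm_trans_self]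
    exact LinearMap.toMatrix'_id
  have hX : skewMatrix (omegaF ⇑g) * (-(pfaff ⇑g)⁻¹ • skewMatrix (iotaMap (omegaF ⇑g))) = 1 := by
    rw [Matrix.mul_smul, skewMatrix_mul_skewMatrix_iotaMap, smul_smul, ← pfaff]
    field_simp
    simp
  rw [hG] at hS
  rw [← Matrix.inv_eq_right_inv hS, Matrix.inv_eq_right_inv hX]

theorem comp_symm_comp {g : Vc ≃ₗ[ℂ] Vc} (hf : IsAnti ⇑f) (hg : IsAnti ⇑g) (hpf : pfaff ⇑g ≠ 0) :
    pfaff ⇑g • (f ∘ₗ (g.symm : Vc →ₗ[ℂ] Vc) ∘ₗ f) =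
      volp (omegaF ⇑f) (omegaF ⇑g) • f - pfaff ⇑f • (g : Vc →ₗ[ℂ] Vc) := by
  apply LinearMap.toMatrix'.injective
  have hG : LinearMap.toMatrix' (g : Vc →ₗ[ℂ] Vc) = skewMatrix (omegaF ⇑g) :=
    toMatrix'_eq (f := (g : Vc →ₗ[ℂ] Vc)) hg
  simp only [map_smul, map_sub, LinearMap.toMatrix'_comp, hf.toMatrix'_eq, hG,
    hg.toMatrix'_symm hpf, Matrix.mul_smul, Matrix.smul_mul, ← Matrix.mul_assoc,
    skewMatrix_mul_skewMatrix_iotaMap_mul, smul_smul]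
  rw [← pfaff]
  field_simp
  module

theorem two_le_finrank_range (hf : IsAnti ⇑f) (hf0 : f ≠ 0) :
    2 ≤ Module.finrank ℂ (LinearMap.range f) := by
  obtain ⟨i, j, hij⟩ : ∃ i j, f (ef i) j ≠ 0 := by
    by_contra! h
    exact hf0 (LinearMap.toMatrix'.injective (by
      ext i j; rw [LinearMap.toMatrix'_apply, ← ef_eq_single, h]; rfl))
  have hind : LinearIndependent ℂ ![f (ef i), f (ef j)] := by
    rw [LinearIndependent.pair_iff]
    intro x y hxy
    have hj := congrFun hxy j
    have hi := congrFun hxy i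
    simp only [Pi.add_apply, Pi.smul_apply, smul_eq_mul, Pi.zero_apply, hf.apply_ef_self,
      hf.apply_ef_apply j i] at hi hj
    exact ⟨(mul_eq_zero.mp (by linear_combination hj)).resolve_right hij,
      (mul_eq_zero.mp (by linear_combination -hi)).resolve_right hij⟩
  calc 2 = Module.finrank ℂ (Submodule.span ℂ (Set.range ![f (ef i), f (ef j)])) := by
        rw [finrank_span_eq_card hind, Fintype.card_fin]
    _ ≤ _ := Submodule.finrank_mono (Submodule.span_le.mpr (by
        rintro _ ⟨k, rfl⟩; fin_cases k <;> exact LinearMap.mem_range_self f _))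

theorem finrank_ker_eq_two {A A' : Vc →ₗ[ℂ] Vc} (hA : IsAnti ⇑A) (hA' : IsAnti ⇑A') (hA0 : A ≠ 0)
    (hA'0 : A' ≠ 0) {B : Vc →ₗ[ℂ] Vc} (hB : Function.Injective B) (h : A ∘ₗ B ∘ₗ A' = 0) :
    Module.finrank ℂ (LinearMap.ker A) = 2 := by
  have hrank := LinearMap.finrank_range_add_finrank_ker A
  have hle : LinearMap.range (B ∘ₗ A') ≤ LinearMap.ker A := by
    rintro _ ⟨x, rfl⟩; exact LinearMap.congr_fun h x
  have hBA' : Module.finrank ℂ (LinearMap.range (B ∘ₗ A')) =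
      Module.finrank ℂ (LinearMap.range A') := by
    rw [LinearMap.range_comp, ← (Submodule.equivMapOfInjective _ hB _).finrank_eq]
  have := Submodule.finrank_mono hle
  have := hA.two_le_finrank_range hA0
  have := hA'.two_le_finrank_range hA'0
  rw [show Module.finrank ℂ Vc = 4 from Module.finrank_fin_fun ℂ] at hrank
  omega

end IsAnti

lemma mem_AnnS {U : Submodule ℂ Vc} {ℓ : Vc} : ℓ ∈ AnnS U ↔ ∀ u ∈ U, ℓ ⬝ᵥ u = 0 := by
  simp [AnnS, Submodule.mem_iInf, dotL]

theorem finrank_add_finrank_AnnS (U : Submodule ℂ Vc) :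
    Module.finrank ℂ U + Module.finrank ℂ (AnnS U) = 4 := by
  have : AnnS U = U.dualAnnihilator.comap (dotProductEquiv ℂ (Fin 4)).toLinearMap := by
    ext ℓ; simp [mem_AnnS, Submodule.mem_dualAnnihilator]
  rw [this, Submodule.comap_equiv_eq_map_symm, LinearEquiv.finrank_map_eq,
    Subspace.finrank_add_finrank_dualAnnihilator_eq, Module.finrank_fin_fun]

section Psi

variable {g : Vc ≃ₗ[ℂ] Vc} {N b : ℚ}

lemma PsiL_apply (p : Vc × Vc) :
    PsiL g N b p = (g.symm p.2 - (b : ℂ) • p.1, (b : ℂ) • p.2 - (N : ℂ) • g p.1) := rfl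

theorem PsiL_PsiL (p : Vc × Vc) : PsiL g N b (PsiL g N b p) = -((N - b ^ 2 : ℚ) : ℂ) • p := by
  rw [PsiL_apply, PsiL_apply]
  refine Prod.ext ?_ ?_ <;>
    simp only [map_sub, map_smul, LinearEquiv.symm_apply_apply, LinearEquiv.apply_symm_apply,
      Prod.smul_fst, Prod.smul_snd, Rat.cast_sub, Rat.cast_pow] <;> module

theorem eigenspace_PsiL {τ : ℂ} (hτ : τ ^ 2 - 2 * b * τ + N = 0) :
    Module.End.eigenspace (PsiL g N b) (τ - b) = LinearMap.graph (τ • (g : Vc →ₗ[ℂ] Vc)) := by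
  ext ⟨v, ℓ⟩
  rw [Module.End.mem_eigenspace_iff, LinearMap.mem_graph_iff, PsiL_apply, Prod.smul_mk,
    Prod.mk.injEq, LinearMap.smul_apply, LinearEquiv.coe_coe]
  dsimp only
  constructor
  · rintro ⟨h1, -⟩
    have : g.symm ℓ = τ • v := by rw [sub_smul] at h1; exact sub_left_inj.mp h1
    rw [← map_smul, ← this, LinearEquiv.apply_symm_apply]
  · rintro rfl
    constructor
    · rw [map_smul, LinearEquiv.symm_apply_apply, sub_smul]
    · rw [smul_smul, smul_smul, ← sub_smul]
      congr 1
      linear_combination -hτ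

theorem PsiL_mem_graph {f : Vc →ₗ[ℂ] Vc}
    (hquad : f ∘ₗ (g.symm : Vc →ₗ[ℂ] Vc) ∘ₗ f = (2 * b : ℂ) • f - (N : ℂ) • (g : Vc →ₗ[ℂ] Vc))
    {x : Vc × Vc} (hx : x ∈ LinearMap.graph f) : PsiL g N b x ∈ LinearMap.graph f := by
  obtain ⟨v, ℓ⟩ := x
  rw [LinearMap.mem_graph_iff] at hx ⊢
  obtain rfl : ℓ = f v := hx
  have := LinearMap.congr_fun hquad v
  simp only [LinearMap.comp_apply, LinearMap.sub_apply, LinearMap.smul_apply,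
    LinearEquiv.coe_coe] at this
  rw [PsiL_apply, map_sub, map_smul, this]
  module

theorem finrank_eigenspace_PsiL_inf_graph {f : Vc →ₗ[ℂ] Vc} (hf : IsAnti ⇑f) (hg : IsAnti ⇑g)
    (hquad : f ∘ₗ (g.symm : Vc →ₗ[ℂ] Vc) ∘ₗ f = (2 * b : ℂ) • f - (N : ℂ) • (g : Vc →ₗ[ℂ] Vc))
    (hfg : ∀ τ : ℂ, f = τ • (g : Vc →ₗ[ℂ] Vc) → τ = b)
    {τ : ℂ} (hτ : τ ^ 2 - 2 * b * τ + N = 0) (hτb : τ ≠ b) :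
    Module.finrank ℂ ↥(Module.End.eigenspace (PsiL g N b) (τ - b) ⊓ LinearMap.graph f) = 2 := by
  rw [eigenspace_PsiL hτ, LinearMap.finrank_graph_inf_graph]
  have hne : ∀ τ' : ℂ, τ' ≠ b → τ' • (g : Vc →ₗ[ℂ] Vc) - f ≠ 0 := fun τ' hτ' h =>
    hτ' (hfg τ' (sub_eq_zero.mp h).symm)
  -- `2b - τ` is the other root of the quadratic
  refine IsAnti.finrank_ker_eq_two (hf.smul_sub hg τ) (hf.smul_sub hg (2 * b - τ)) (hne τ hτb)
    (hne _ fun h => hτb (by linear_combination -h)) g.symm.injective (LinearMap.ext fun x => ?_)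
  have := LinearMap.congr_fun hquad x
  simp only [LinearMap.comp_apply, LinearMap.sub_apply, LinearMap.smul_apply,
    LinearEquiv.coe_coe] at this ⊢
  simp only [map_sub, map_smul, LinearEquiv.apply_symm_apply, LinearEquiv.symm_apply_apply, this,
    LinearMap.zero_apply]
  linear_combination (norm := module) -(hτ • g x)

theorem PsiL_mem_prod_AnnS {U : Submodule ℂ Vc} (hgU : U.map (g : Vc →ₗ[ℂ] Vc) = AnnS U)
    {x : Vc × Vc} (hx : x ∈ U.prod (AnnS U)) : PsiL g N b x ∈ U.prod (AnnS U) := by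
  obtain ⟨v, ℓ⟩ := x
  obtain ⟨hx1, hx2⟩ := Submodule.mem_prod.mp hx
  rw [← hgU] at hx2 ⊢
  obtain ⟨y, hy, rfl⟩ := hx2
  rw [PsiL_apply, Submodule.mem_prod]
  simp only [LinearEquiv.coe_coe, LinearEquiv.symm_apply_apply]
  exact ⟨sub_mem hy (U.smul_mem _ hx1), sub_mem (Submodule.smul_mem _ _ ⟨y, hy, rfl⟩)
    (Submodule.smul_mem _ _ ⟨_, hx1, rfl⟩)⟩

theorem finrank_eigenspace_PsiL_inf_prod_AnnS {U : Submodule ℂ Vc}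
    (hgU : U.map (g : Vc →ₗ[ℂ] Vc) = AnnS U) {τ : ℂ} (hτ : τ ^ 2 - 2 * b * τ + N = 0) :
    Module.finrank ℂ ↥(Module.End.eigenspace (PsiL g N b) (τ - b) ⊓ U.prod (AnnS U)) =
      Module.finrank ℂ U := by
  rw [eigenspace_PsiL hτ]
  refine LinearMap.finrank_graph_inf_prod fun x hx => ?_
  rw [← hgU]
  exact Submodule.smul_mem _ _ ⟨x, hx, rfl⟩

end Psi

lemma pfaff_of_omegaF_eq_h0v {φ : Vc → Vc} {c e : ℤ} (h : omegaF φ = h0v c e) :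
    pfaff φ = (c : ℂ) ^ 2 * e := by
  simp only [pfaff, volp, Fin.isValue, h, h0v, cons_val_zero, cons_val, cons_val_one, mul_zero,
    sub_zero, add_zero]
  ring

theorem volp_omegaF_h0v_and_pfaff_of_iotaMap_eq {t1 t2 t3 c e s : ℤ} {m : ℚ} {f : Vc → Vc}
    {σ : W2 × ℂ} (ht2 : t2 ≠ 0) (hc : c ≠ 0) (he : e ≠ 0) (hσ2 : σ.2 ≠ 0)
    (hrel : (t1 : ℚ) * t2 = 2 * m * t3 ^ 2) (hσh : hev c e s σ = 0) (hσσ : Bf m σ σ = 0)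
    (hf : iotaMap (omegaF f) = ((-2 * (t3 : ℂ)) / ((t2 : ℂ) * σ.2)) • σ.1) :
    volp (omegaF f) (h0v c e) = 2 * (bq t2 t3 c e s : ℂ) * ((c : ℂ) ^ 2 * e) ∧
      pfaff f = (Nq t1 t2 c e : ℂ) * ((c : ℂ) ^ 2 * e) := by
  have hω : omegaF f = ((-2 * (t3 : ℂ)) / ((t2 : ℂ) * σ.2)) • iotaMap σ.1 := by
    rw [← iotaMap_smul, ← hf, iotaMap_iotaMap]
  have hrelC : ((t1 : ℂ) * t2 = 2 * m * t3 ^ 2) := by exact_mod_cast hrel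
  rw [hev] at hσh
  rw [Bf, volp] at hσσ
  have ht2' : (t2 : ℂ) ≠ 0 := by exact_mod_cast ht2
  have hc' : (c : ℂ) ≠ 0 := by exact_mod_cast hc
  have he' : (e : ℂ) ≠ 0 := by exact_mod_cast he
  constructor
  · simp only [volp, Fin.isValue, hω, neg_mul, iotaMap, Pi.smul_apply, cons_val_zero, smul_eq_mul,
      h0v, cons_val, cons_val_one, mul_neg, mul_zero, sub_zero, add_zero, bq, Rat.cast_div,
      Rat.cast_mul, Rat.cast_intCast, Rat.cast_pow]
    field_simp
    linear_combination -(t3 : ℂ) * hσh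
  · simp only [pfaff, volp, Fin.isValue, hω, neg_mul, iotaMap, Pi.smul_apply, cons_val_zero,
      smul_eq_mul, cons_val, cons_val_one, mul_neg, neg_neg, Nq, Rat.cast_div, Rat.cast_intCast,
      Rat.cast_mul, Rat.cast_pow]
    field_simp
    linear_combination 2 * (t3 : ℂ) ^ 2 * hσσ - σ.2 ^ 2 * hrelC

theorem map_eq_AnnS_of_w2_eq {g : Vc ≃ₗ[ℂ] Vc} {c e : ℤ} (hg : IsAnti ⇑g)
    (hgw : omegaF ⇑g = h0v c e) {U : Submodule ℂ Vc} (hU2 : Module.finrank ℂ U = 2) {v w : Vc}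
    (hU : U = Submodule.span ℂ {v, w}) {t : ℂ} {α : W2} (hvw : w2 v w = t • α)
    (hα : (c : ℂ) * e * α 0 + c * α 5 = 0) :
    U.map (g : Vc →ₗ[ℂ] Vc) = AnnS U := by
  have hself : ∀ x, g x ⬝ᵥ x = 0 := fun x => by linear_combination hg x x / 2
  have hvw' : g v ⬝ᵥ w = 0 := by
    have := IsAnti.dotProduct_apply (f := (g : Vc →ₗ[ℂ] Vc)) hg v w
    simp only [LinearEquiv.coe_coe] at this
    rw [this, hgw, hvw]
    simp only [dotProduct, h0v, Pi.smul_apply, smul_eq_mul, Fin.sum_univ_six, Fin.isValue,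
      cons_val_zero, cons_val_one, zero_mul, add_zero, cons_val, neg_add_rev]
    linear_combination -t * hα
  have hwv : g w ⬝ᵥ v = 0 := by linear_combination hg v w - hvw'
  have hle : U.map (g : Vc →ₗ[ℂ] Vc) ≤ AnnS U := by
    rintro _ ⟨x, hx, rfl⟩
    rw [mem_AnnS]
    intro u hu
    rw [hU] at hx hu
    obtain ⟨a, a', rfl⟩ := Submodule.mem_span_pair.mp hx
    obtain ⟨d, d', rfl⟩ := Submodule.mem_span_pair.mp hu
    simp [dotProduct_add, add_dotProduct, hself, hvw', hwv]
  refine Submodule.eq_of_le_of_finrank_eq hle ?_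
  have := finrank_add_finrank_AnnS U
  rw [LinearEquiv.finrank_map_eq]
  omega

theorem IsH10.mapsTo_PsiL_and_finrank_eigenspace {t1 t2 t3 c e s : ℤ} {m : ℚ}
    {g : Vc ≃ₗ[ℂ] Vc} (ht2 : t2 ≠ 0) (hc : c ≠ 0) (he : e ≠ 0)
    (hrel : (t1 : ℚ) * t2 = 2 * m * t3 ^ 2) (hg : IsAnti ⇑g) (hgw : omegaF ⇑g = h0v c e)
    {σ : W2 × ℂ} (hσ : memD m σ) (hσh : hev c e s σ = 0) {H : Submodule ℂ (Vc × Vc)}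
    (hH : IsH10 t1 t2 t3 σ H) :
    (∀ x ∈ H, PsiL g (Nq t1 t2 c e) (bq t2 t3 c e s) x ∈ H) ∧
      ∀ τ : ℂ, τ ^ 2 - 2 * (bq t2 t3 c e s : ℂ) * τ + (Nq t1 t2 c e : ℂ) = 0 →
        τ ≠ bq t2 t3 c e s →
        Module.finrank ℂ ↥(Module.End.eigenspace (PsiL g (Nq t1 t2 c e) (bq t2 t3 c e s))
          (τ - bq t2 t3 c e s) ⊓ H) = 2 := by
  have hpf : pfaff ⇑g = (c : ℂ) ^ 2 * e := pfaff_of_omegaF_eq_h0v hgw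
  have hpf0 : (c : ℂ) ^ 2 * e ≠ 0 := by exact_mod_cast (by positivity : (c : ℤ) ^ 2 * e ≠ 0)
  rcases hH with ⟨hσ2, f, hf, -, hfσ, rfl⟩ | ⟨hσ2, U, hU2, ⟨v, w, hU, t, -, hvw⟩, rfl⟩
  · obtain ⟨hfg, hff⟩ := volp_omegaF_h0v_and_pfaff_of_iotaMap_eq ht2 hc he hσ2 hrel hσh hσ.2.1 hfσ
    have hquad : f ∘ₗ (g.symm : Vc →ₗ[ℂ] Vc) ∘ₗ f =
        (2 * bq t2 t3 c e s : ℂ) • f - (Nq t1 t2 c e : ℂ) • (g : Vc →ₗ[ℂ] Vc) := by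
      have := hf.comp_symm_comp hg (hpf ▸ hpf0)
      rw [hgw, hfg, hff, hpf] at this
      apply smul_right_injective _ hpf0
      dsimp only
      rw [this]
      module
    have hfτ (τ : ℂ) (h : f = τ • (g : Vc →ₗ[ℂ] Vc)) : τ = bq t2 t3 c e s := by
      rw [h, LinearMap.coe_smul, LinearEquiv.coe_coe, omegaF_smul, hgw] at hfg
      simp only [volp, h0v, Pi.smul_apply, smul_eq_mul, Fin.isValue, cons_val_zero, cons_val,
        cons_val_one, mul_zero, sub_zero, add_zero] at hfg
      apply mul_right_cancel₀ hpf0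
      linear_combination hfg / 2
    exact ⟨fun x hx => PsiL_mem_graph hquad hx,
      fun τ hτ hτb => finrank_eigenspace_PsiL_inf_graph hf hg hquad hfτ hτ hτb⟩
  · have hgU := map_eq_AnnS_of_w2_eq hg hgw hU2 hU hvw (by
      rw [hev, hσ2, mul_zero, add_zero] at hσh; exact hσh)
    exact ⟨fun x hx => PsiL_mem_prod_AnnS hgU hx,
      fun τ hτ _ => (finrank_eigenspace_PsiL_inf_prod_AnnS hgU hτ).trans hU2⟩

lemma mem_ratSet_iff {p : Vc × Vc} :
    p ∈ ratSet ↔ (∀ i, p.1 i ∈ (⊥ : IntermediateField ℚ ℂ)) ∧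
      ∀ i, p.2 i ∈ (⊥ : IntermediateField ℚ ℂ) := by
  simp only [ratSet, Set.mem_ofPred_eq, IntermediateField.mem_bot, Set.mem_range, eq_ratCast,
    eq_comm]

lemma smul_mem_ratSet (q : ℚ) {p : Vc × Vc} (hp : p ∈ ratSet) : (q : ℂ) • p ∈ ratSet := by
  rw [mem_ratSet_iff] at hp ⊢
  exact ⟨fun i => mul_mem (SubfieldClass.ratCast_mem _ q) (hp.1 i),
    fun i => mul_mem (SubfieldClass.ratCast_mem _ q) (hp.2 i)⟩

section Rational

variable {S : Type*} [SetLike S ℂ] [SubringClass S ℂ] {K : S}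

lemma mulVec_mem_of_forall_mem {n : Type*} [Fintype n] {M : Matrix n n ℂ} (hM : ∀ i j, M i j ∈ K)
    {v : n → ℂ} (hv : ∀ j, v j ∈ K) (i : n) : (M *ᵥ v) i ∈ K :=
  (sum_mem fun j _ => mul_mem (hM i j) (hv j) : ∑ j, M i j * v j ∈ K)

lemma skewMatrix_mem {ω : W2} (hω : ∀ k, ω k ∈ K) (i j : Fin 4) : skewMatrix ω i j ∈ K := by
  fin_cases i <;> fin_cases j <;> simp [skewMatrix, hω, zero_mem]

end Rational

theorem PsiL_mem_ratSet {g : Vc ≃ₗ[ℂ] Vc} {c e : ℤ} (hg : IsAnti ⇑g) (hgw : omegaF ⇑g = h0v c e)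
    (hc : c ≠ 0) (he : e ≠ 0) {N b : ℚ} {p : Vc × Vc} (hp : p ∈ ratSet) :
    PsiL g N b p ∈ ratSet := by
  have hpf : pfaff ⇑g = (c : ℂ) ^ 2 * e := pfaff_of_omegaF_eq_h0v hgw
  have hpf0 : pfaff ⇑g ≠ 0 := by rw [hpf]; exact_mod_cast (by positivity : (c : ℤ) ^ 2 * e ≠ 0)
  have hG (x : Vc) : g x = skewMatrix (h0v c e) *ᵥ x := by
    rw [← hgw]; exact IsAnti.apply_eq_mulVec (f := (g : Vc →ₗ[ℂ] Vc)) hg x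
  have hG' (x : Vc) : g.symm x =
      (-((c : ℂ) ^ 2 * e)⁻¹ • skewMatrix (iotaMap (h0v c e))) *ᵥ x := by
    rw [← hpf, ← hgw, ← hg.toMatrix'_symm hpf0, LinearMap.toMatrix'_mulVec, LinearEquiv.coe_coe]
  have hh0 : ∀ k, h0v c e k ∈ (⊥ : IntermediateField ℚ ℂ) := by
    intro k; fin_cases k <;> simp [h0v, mul_mem, intCast_mem, zero_mem]
  have hι : ∀ k, iotaMap (h0v c e) k ∈ (⊥ : IntermediateField ℚ ℂ) := by
    intro k; fin_cases k <;> simp [iotaMap, hh0]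
  have hGinv (i j : Fin 4) :
      (-((c : ℂ) ^ 2 * e)⁻¹ • skewMatrix (iotaMap (h0v c e))) i j ∈ (⊥ : IntermediateField ℚ ℂ) :=
    mul_mem (neg_mem (inv_mem (mul_mem (pow_mem (intCast_mem _ c) 2) (intCast_mem _ e))))
      (skewMatrix_mem hι i j)
  rw [mem_ratSet_iff] at hp ⊢
  obtain ⟨hp1, hp2⟩ := hp
  refine ⟨fun i => ?_, fun i => ?_⟩
  · simp only [PsiL_apply, Pi.sub_apply, Pi.smul_apply, smul_eq_mul, hG']
    exact sub_mem (mulVec_mem_of_forall_mem hGinv hp2 i)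
      (mul_mem (SubfieldClass.ratCast_mem _ b) (hp1 i))
  · simp only [PsiL_apply, Pi.sub_apply, Pi.smul_apply, smul_eq_mul, hG]
    exact sub_mem (mul_mem (SubfieldClass.ratCast_mem _ b) (hp2 i))
      (mul_mem (SubfieldClass.ratCast_mem _ N) (mulVec_mem_of_forall_mem (skewMatrix_mem hh0) hp1 i))

theorem image_PsiL_ratSet {g : Vc ≃ₗ[ℂ] Vc} {N b : ℚ} (hk : N - b ^ 2 ≠ 0)
    (hmaps : ∀ p ∈ ratSet, PsiL g N b p ∈ ratSet) : PsiL g N b '' ratSet = ratSet := by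
  refine Set.MapsTo.image_subset (fun p hp => hmaps p hp) |>.antisymm fun x hx => ?_
  refine ⟨((-(N - b ^ 2)⁻¹ : ℚ) : ℂ) • PsiL g N b x, smul_mem_ratSet _ (hmaps x hx), ?_⟩
  rw [map_smul, PsiL_PsiL, smul_smul, ← Rat.cast_neg, ← Rat.cast_mul, neg_mul_neg,
    inv_mul_cancel₀ hk, Rat.cast_one, one_smul]

theorem Nq_sub_bq_sq {t1 t2 t3 c e s : ℤ} {m : ℚ} (ht2 : t2 ≠ 0) (hc : c ≠ 0) (he : e ≠ 0)
    (hrel : (t1 : ℚ) * t2 = 2 * m * t3 ^ 2) :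
    Nq t1 t2 c e - bq t2 t3 c e s ^ 2 =
      (t3 : ℚ) ^ 2 / ((c : ℚ) ^ 4 * (e : ℚ) ^ 2 * (t2 : ℚ) ^ 2) *
        (2 * m * (c : ℚ) ^ 2 * (e : ℚ) - (s : ℚ) ^ 2) := by
  rw [Nq, bq]
  field_simp
  linear_combination (c : ℚ) ^ 2 * e * hrel

theorem Nq_sub_bq_sq_pos {t1 t2 t3 c e s : ℤ} {m : ℚ} (ht2 : t2 ≠ 0) (ht3 : t3 ≠ 0) (hc : c ≠ 0)
    (he : e ≠ 0) (hm : 0 < m) (hrel : (t1 : ℚ) * t2 = 2 * m * t3 ^ 2)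
    (hhh : 0 < 2 * (c : ℚ) ^ 2 * (e : ℚ) - (s : ℚ) ^ 2 / m) :
    0 < Nq t1 t2 c e - bq t2 t3 c e s ^ 2 := by
  have : (t2 : ℚ) ≠ 0 := by exact_mod_cast ht2
  have : (t3 : ℚ) ≠ 0 := by exact_mod_cast ht3
  have hms : 2 * m * (c : ℚ) ^ 2 * e - (s : ℚ) ^ 2 = m * (2 * (c : ℚ) ^ 2 * e - (s : ℚ) ^ 2 / m) := by
    field_simp
  rw [Nq_sub_bq_sq ht2 hc he hrel, hms]
  exact mul_pos (by positivity) (mul_pos hm hhh)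

lemma sqNb_sq {N b : ℚ} (h : 0 ≤ N - b ^ 2) : sqNb N b ^ 2 = -((N - b ^ 2 : ℚ) : ℂ) := by
  rw [sqNb, mul_pow, Complex.I_sq, ← Complex.ofReal_pow, Real.sq_sqrt (by exact_mod_cast h)]
  push_cast; ring

lemma sqNb_ne_zero {N b : ℚ} (h : 0 < N - b ^ 2) : sqNb N b ≠ 0 :=
  mul_ne_zero Complex.I_ne_zero
    (Complex.ofReal_ne_zero.mpr (Real.sqrt_pos.mpr (by exact_mod_cast h)).ne')

theorem statement15_general (t1 t2 t3 : ℤ) (h2 : t2 ≠ 0) (h3 : t3 ≠ 0)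
    (m : ℚ) (hm : 0 < m) (hrel : (t1 : ℚ) * t2 = 2 * m * t3 ^ 2)
    (c e s : ℤ) (hc : 0 < c) (he : 0 < e)
    (hhh : 0 < 2 * (c : ℚ) ^ 2 * (e : ℚ) - (s : ℚ) ^ 2 / m)
    (g : Vc ≃ₗ[ℂ] Vc) (hg : IsAnti ⇑g) (hgw : omegaF ⇑g = h0v c e) :
    Set.image (⇑(PsiL g (Nq t1 t2 c e) (bq t2 t3 c e s))) ratSet = ratSet ∧
    (∀ p : Vc × Vc,
      PsiL g (Nq t1 t2 c e) (bq t2 t3 c e s) (PsiL g (Nq t1 t2 c e) (bq t2 t3 c e s) p) =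
        -(((Nq t1 t2 c e - bq t2 t3 c e s ^ 2 : ℚ) : ℂ)) • p) ∧
    (Nq t1 t2 c e - bq t2 t3 c e s ^ 2 =
        (t3 : ℚ) ^ 2 / ((c : ℚ) ^ 4 * (e : ℚ) ^ 2 * (t2 : ℚ) ^ 2) *
          (2 * m * (c : ℚ) ^ 2 * (e : ℚ) - (s : ℚ) ^ 2) ∧
      (t3 : ℚ) ^ 2 / ((c : ℚ) ^ 4 * (e : ℚ) ^ 2 * (t2 : ℚ) ^ 2) *
          (2 * m * (c : ℚ) ^ 2 * (e : ℚ) - (s : ℚ) ^ 2) =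
        (t3 : ℚ) ^ 2 / ((c : ℚ) ^ 4 * (e : ℚ) ^ 2 * (t2 : ℚ) ^ 2) * m *
          (2 * (c : ℚ) ^ 2 * (e : ℚ) - (s : ℚ) ^ 2 / m) ∧
      0 < Nq t1 t2 c e - bq t2 t3 c e s ^ 2) ∧
    (∀ σ : W2 × ℂ, memD m σ → hev c e s σ = 0 →
      ∀ H : Submodule ℂ (Vc × Vc), IsH10 t1 t2 t3 σ H →
        (∀ x ∈ H, PsiL g (Nq t1 t2 c e) (bq t2 t3 c e s) x ∈ H) ∧
        Module.finrank ℂ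
          ↥(Module.End.eigenspace (PsiL g (Nq t1 t2 c e) (bq t2 t3 c e s))
              (sqNb (Nq t1 t2 c e) (bq t2 t3 c e s)) ⊓ H) = 2 ∧
        Module.finrank ℂ
          ↥(Module.End.eigenspace (PsiL g (Nq t1 t2 c e) (bq t2 t3 c e s))
              (-sqNb (Nq t1 t2 c e) (bq t2 t3 c e s)) ⊓ H) = 2) := by
  have hk' : (t3 : ℚ) ^ 2 / ((c : ℚ) ^ 4 * (e : ℚ) ^ 2 * (t2 : ℚ) ^ 2) *
        (2 * m * (c : ℚ) ^ 2 * (e : ℚ) - (s : ℚ) ^ 2) =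
      (t3 : ℚ) ^ 2 / ((c : ℚ) ^ 4 * (e : ℚ) ^ 2 * (t2 : ℚ) ^ 2) * m *
        (2 * (c : ℚ) ^ 2 * (e : ℚ) - (s : ℚ) ^ 2 / m) := by
    field_simp
  have hpos := Nq_sub_bq_sq_pos h2 h3 hc.ne' he.ne' hm hrel hhh
  refine ⟨image_PsiL_ratSet hpos.ne' fun p => PsiL_mem_ratSet hg hgw hc.ne' he.ne',
    PsiL_PsiL, ⟨Nq_sub_bq_sq h2 hc.ne' he.ne' hrel, hk', hpos⟩, fun σ hσ hσh H hH => ?_⟩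
  obtain ⟨hinv, hdim⟩ :=
    IsH10.mapsTo_PsiL_and_finrank_eigenspace h2 hc.ne' he.ne' hrel hg hgw hσ hσh hH
  set N := Nq t1 t2 c e
  set b := bq t2 t3 c e s
  have hlam : sqNb N b ^ 2 = -((N : ℂ) - (b : ℂ) ^ 2) := by
    rw [sqNb_sq hpos.le]; push_cast; ring
  have hlam0 := sqNb_ne_zero hpos
  refine ⟨hinv, ?_, ?_⟩
  · have := hdim (b + sqNb N b) (by linear_combination hlam) (by simpa using hlam0)
    rwa [add_sub_cancel_left] at this
  · have := hdim (b - sqNb N b) (by linear_combination hlam) (by simpa using hlam0)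
    rwa [sub_sub_cancel_left] at this

/-- **(From the proof of Theorem 5.2 in O'Grady.)** Assume `θ₁, θ₂, θ₃` all nonzero,
`m > 0`, `θ₁·θ₂ = 2m·θ₃²`, `c, e > 0`, `(h,h)^∨ = 2c²e − s²/m > 0`, and let `g` be the
antisymmetric isomorphism `V_ℂ → V_ℂ^∨` with `ω_g = h₀`.  Then:
(i) `Ψ` maps `V_ℚ ⊕ V_ℚ^∨` onto itself;
(ii) `Ψ∘Ψ = −(N−b²)·Id` where `N − b² = (θ₃²/(c⁴e²θ₂²))·(2mc²e − s²) > 0`;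
(iii) for every `[σ] ∈ D_h`, `Ψ` preserves `H^{1,0}_{[σ]}(θ)` and its restriction there
has eigenvalues `±i√(N−b²)`, each with 2-dimensional eigenspace. -/
theorem statement15 (t1 t2 t3 : ℤ) (h1 : t1 ≠ 0) (h2 : t2 ≠ 0) (h3 : t3 ≠ 0)
    (m : ℚ) (hm : 0 < m) (hrel : (t1 : ℚ) * t2 = 2 * m * t3 ^ 2)
    (c e s : ℤ) (hc : 0 < c) (he : 0 < e)
    (hhh : 0 < 2 * (c : ℚ) ^ 2 * (e : ℚ) - (s : ℚ) ^ 2 / m)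
    (g : Vc ≃ₗ[ℂ] Vc) (hg : IsAnti ⇑g) (hgw : omegaF ⇑g = h0v c e) :
    Set.image (⇑(PsiL g (Nq t1 t2 c e) (bq t2 t3 c e s))) ratSet = ratSet ∧
    (∀ p : Vc × Vc,
      PsiL g (Nq t1 t2 c e) (bq t2 t3 c e s) (PsiL g (Nq t1 t2 c e) (bq t2 t3 c e s) p) =
        -(((Nq t1 t2 c e - bq t2 t3 c e s ^ 2 : ℚ) : ℂ)) • p) ∧
    (Nq t1 t2 c e - bq t2 t3 c e s ^ 2 =
        (t3 : ℚ) ^ 2 / ((c : ℚ) ^ 4 * (e : ℚ) ^ 2 * (t2 : ℚ) ^ 2) *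
          (2 * m * (c : ℚ) ^ 2 * (e : ℚ) - (s : ℚ) ^ 2) ∧
      (t3 : ℚ) ^ 2 / ((c : ℚ) ^ 4 * (e : ℚ) ^ 2 * (t2 : ℚ) ^ 2) *
          (2 * m * (c : ℚ) ^ 2 * (e : ℚ) - (s : ℚ) ^ 2) =
        (t3 : ℚ) ^ 2 / ((c : ℚ) ^ 4 * (e : ℚ) ^ 2 * (t2 : ℚ) ^ 2) * m *
          (2 * (c : ℚ) ^ 2 * (e : ℚ) - (s : ℚ) ^ 2 / m) ∧
      0 < Nq t1 t2 c e - bq t2 t3 c e s ^ 2) ∧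
    (∀ σ : W2 × ℂ, memD m σ → hev c e s σ = 0 →
      ∀ H : Submodule ℂ (Vc × Vc), IsH10 t1 t2 t3 σ H →
        (∀ x ∈ H, PsiL g (Nq t1 t2 c e) (bq t2 t3 c e s) x ∈ H) ∧
        Module.finrank ℂ
          ↥(Module.End.eigenspace (PsiL g (Nq t1 t2 c e) (bq t2 t3 c e s))
              (sqNb (Nq t1 t2 c e) (bq t2 t3 c e s)) ⊓ H) = 2 ∧
        Module.finrank ℂ
          ↥(Module.End.eigenspace (PsiL g (Nq t1 t2 c e) (bq t2 t3 c e s))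
              (-sqNb (Nq t1 t2 c e) (bq t2 t3 c e s)) ⊓ H) = 2) :=
  statement15_general t1 t2 t3 h2 h3 m hm hrel c e s hc he hhh g hg hgw
end
end
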